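/- If T and T' are distinct unrooted binary trees on the same leaf set, then there exists a split (S_1', S_2') of T' (induced by removing an internal edge of T') and a split (S_1, S_2) of T such that all four intersections S_1 ∩ S_1', S_1 ∩ S_2', S_2 ∩ S_1', S_2 ∩ S_2' are nonempty. -/

import Mathlib

/-!
Let `X` be a split of one tree that is not a split of the other tree `T`, and suppose every split
`S` of `T` is compatible with `X`, i.e. one of the four intersections is empty. Fix a leaf `a ∉ X`
and look at `T` from `a`: every split avoiding `a` is then disjoint from `X`, contained in it, or
contains it. Starting from the edge at `a`, walk down `T` while `X` stays inside the side of the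
current edge `uv`. If `u` is a leaf, `X` is that single leaf; otherwise the side is the union of
the sides beyond the two other neighbours of `u`, so either `X` lies in one of them and we go down,
or `X` contains both and is the side itself. Sides shrink strictly, so the walk ends, and `X` is a
split of `T`.
-/

open SimpleGraph

/-- Degree via neighbor set cardinality (avoids decidability assumptions). -/
noncomputable def pdeg {V : Type} (g : SimpleGraph V) (v : V) : ℕ :=
  (g.neighborSet v).ncard

/-- `g` is a phylogeny on leaf type `L` with internal-node type `I`:
an unrooted binary tree whose leaves are exactly the `L`-vertices. -/
def IsPhylo {L I : Type} (g : SimpleGraph (L ⊕ I)) : Prop :=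
  g.Connected ∧ g.IsAcyclic ∧ (∀ l : L, pdeg g (Sum.inl l) = 1) ∧
    (∀ i : I, pdeg g (Sum.inr i) = 3)

/-- The side of the split determined by the edge `{u,v}` that contains `u`:
the set of taxa reachable from `u` after deleting that edge. -/
def splitOf {L I : Type} (g : SimpleGraph (L ⊕ I)) (u v : L ⊕ I) : Set L :=
  {x : L | (g.deleteEdges {s(u, v)}).Reachable (Sum.inl x) u}

/-- The set of (leaf-)splits of `g`, one for each oriented edge. -/
def splits {L I : Type} (g : SimpleGraph (L ⊕ I)) : Set (Set L) :=
  {S | ∃ u v, g.Adj u v ∧ S = splitOf g u v}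

/-- `quartetSplit g a b c d` means `g` induces the quartet topology `ab|cd`:
the path from `a` to `b` is vertex-disjoint from the path from `c` to `d`. -/
def quartetSplit {L I : Type} (g : SimpleGraph (L ⊕ I)) (a b c d : L) : Prop :=
  ∃ (p : g.Path (Sum.inl a) (Sum.inl b)) (q : g.Path (Sum.inl c) (Sum.inl d)),
    ∀ x ∈ p.1.support, x ∉ q.1.support

/-- The quartet distance between two phylogenies on the same taxa:
the number of 4-element subsets of taxa on which the induced quartet
topologies differ. -/
noncomputable def dQ {L I : Type} [Fintype L] [DecidableEq L] (g g' : SimpleGraph (L ⊕ I)) : ℕ :=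
  Set.ncard {s : Finset L | s.card = 4 ∧ ∃ a b c d : L, s = ({a, b, c, d} : Finset L) ∧
    quartetSplit g a b c d ∧ ¬ quartetSplit g' a b c d}

namespace SimpleGraph

variable {V : Type} {G : SimpleGraph V}

/-- `splitOf g u v` is definitionally the preimage of `g.side u v` under `Sum.inl`. -/
def side (G : SimpleGraph V) (u v : V) : Set V :=
  {z | (G.deleteEdges {s(u, v)}).Reachable z u}

theorem mem_side_self (u v : V) : u ∈ G.side u v := Reachable.refl _

namespace IsAcyclic

theorem not_reachable_deleteEdges (hG : G.IsAcyclic) {u v : V} (h : G.Adj u v) :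
    ¬ (G.deleteEdges {s(u, v)}).Reachable u v :=
  isBridge_iff.mp (isAcyclic_iff_forall_adj_isBridge.mp hG h)

theorem notMem_side_swap (hG : G.IsAcyclic) {u v z : V} (h : G.Adj u v) (hz : z ∈ G.side u v) :
    z ∉ G.side v u := fun hz' =>
  hG.not_reachable_deleteEdges h (hz.symm.trans (by rwa [Sym2.eq_swap]))

theorem side_ssubset_side (hG : G.IsAcyclic) {w u v : V} (hwu : G.Adj w u) (hwv : w ≠ v) :
    G.side w u ⊂ G.side u v := by
  classical
  refine ⟨fun z hz => ?_, fun h =>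
    hG.not_reachable_deleteEdges hwu (h (mem_side_self u v)).symm⟩
  obtain ⟨p⟩ := hz
  have hu : u ∉ p.support := fun hu =>
    hG.not_reachable_deleteEdges hwu (Reachable.symm ⟨p.dropUntil u hu⟩)
  have huv' : (G.deleteEdges {s(u, v)}).Adj w u :=
    deleteEdges_adj.mpr ⟨hwu, by simp [hwu.ne, hwv]⟩
  let q : G.Walk z w := p.mapLe (deleteEdges_le _)
  refine Reachable.trans ⟨q.toDeleteEdge s(u, v) fun he => ?_⟩ huv'.reachable
  exact hu (by simpa [q] using q.fst_mem_support_of_mem_edges he)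

theorem induction_on_adj [Finite V] (hG : G.IsAcyclic) {P : V → V → Prop}
    (step : ∀ u v, G.Adj u v → (∀ w, G.Adj w u → w ≠ v → P w u) → P u v)
    {u v : V} (huv : G.Adj u v) : P u v := by
  induction hn : (G.side u v).ncard using Nat.strong_induction_on generalizing u v with
  | _ n ih =>
    refine step u v huv fun w hwu hwv => ih _ ?_ hwu rfl
    exact hn ▸ Set.ncard_lt_ncard (hG.side_ssubset_side hwu hwv)

end IsAcyclic

theorem Connected.exists_adj_mem_side (hG : G.Connected) {u z : V} (hzu : z ≠ u) :
    ∃ w, G.Adj w u ∧ z ∈ G.side w u := by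
  classical
  obtain ⟨p, hp⟩ := (hG.preconnected z u).exists_isPath
  obtain ⟨w, hwu, q, hq⟩ := Walk.exists_eq_cons_of_ne hzu.symm p.reverse
  have hu : u ∉ q.reverse.support := by
    simpa using ((Walk.cons_isPath_iff _ _).mp (hq ▸ hp.reverse)).2
  exact ⟨w, hwu.symm, ⟨q.reverse.toDeleteEdge s(w, u) fun he =>
    hu (q.reverse.snd_mem_support_of_mem_edges he)⟩⟩

theorem exists_adj_ne_of_ncard_neighborSet_eq_three {u v : V}
    (h3 : (G.neighborSet u).ncard = 3) (huv : G.Adj u v) :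
    ∃ w₁ w₂, G.Adj w₁ u ∧ G.Adj w₂ u ∧ w₁ ≠ v ∧ w₂ ≠ v ∧
      ∀ w, G.Adj w u → w ≠ v → w = w₁ ∨ w = w₂ := by
  obtain ⟨a, b, c, hab, hac, hbc, hN⟩ := Set.ncard_eq_three.mp h3
  have hadj : ∀ w, G.Adj w u ↔ w = a ∨ w = b ∨ w = c := fun w => by
    rw [adj_comm, ← mem_neighborSet, hN]; simp
  rcases (hadj v).mp huv.symm with rfl | rfl | rfl
  · exact ⟨b, c, (hadj b).2 (by simp), (hadj c).2 (by simp), hab.symm, hac.symm,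
      fun w hw hwv => by grind⟩
  · exact ⟨a, c, (hadj a).2 (by simp), (hadj c).2 (by simp), hab, hbc.symm,
      fun w hw hwv => by grind⟩
  · exact ⟨a, b, (hadj a).2 (by simp), (hadj b).2 (by simp), hac, hbc,
      fun w hw hwv => by grind⟩

theorem eq_of_adj_of_pdeg_eq_one {u w z : V} (hu : pdeg G u = 1) (hw : G.Adj u w)
    (hz : G.Adj u z) : z = w := by
  obtain ⟨a, hN⟩ := Set.ncard_eq_one.mp hu
  have ha : ∀ y, G.Adj u y → y = a := fun y hy => by
    rw [← Set.mem_singleton_iff, ← hN]; exact hy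
  exact (ha z hz).trans (ha w hw).symm

end SimpleGraph

section Splits

variable {L I : Type} {g : SimpleGraph (L ⊕ I)}

theorem splitOf_subset_splitOf (hg : g.IsAcyclic) {w u v : L ⊕ I} (hwu : g.Adj w u)
    (hwv : w ≠ v) :
    splitOf g w u ⊆ splitOf g u v :=
  Set.preimage_mono (f := Sum.inl) (hg.side_ssubset_side hwu hwv).subset

theorem splitOf_swap_subset_compl (hg : g.IsAcyclic) {u v : L ⊕ I} (huv : g.Adj u v) :
    splitOf g v u ⊆ (splitOf g u v)ᶜ :=
  fun _ hvu huv' => hg.notMem_side_swap huv huv' hvu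

theorem splitOf_eq_singleton {x : L} {w : L ⊕ I} (hleaf : pdeg g (.inl x) = 1)
    (hxw : g.Adj (.inl x) w) : splitOf g (.inl x) w = {x} := by
  ext y
  refine ⟨fun ⟨p⟩ => ?_, fun hy => hy ▸ mem_side_self _ _⟩
  cases p.reverse with
  | nil => rfl
  | cons h _ =>
    obtain ⟨hadj, hne⟩ := deleteEdges_adj.mp h
    rw [eq_of_adj_of_pdeg_eq_one hleaf hxw hadj] at hne
    exact absurd rfl hne

theorem splitOf_nonempty [Finite L] [Finite I] (hg : g.IsAcyclic)
    (hdeg : ∀ i : I, pdeg g (.inr i) = 3) {u v : L ⊕ I} (huv : g.Adj u v) :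
    (splitOf g u v).Nonempty := by
  refine hg.induction_on_adj (P := fun u v => (splitOf g u v).Nonempty) (fun u v huv ih => ?_) huv
  cases u with
  | inl x => exact ⟨x, mem_side_self _ _⟩
  | inr i =>
    obtain ⟨w, -, hwu, -, hwv, -, -⟩ := exists_adj_ne_of_ncard_neighborSet_eq_three (hdeg i) huv
    exact (ih w hwu hwv).mono (splitOf_subset_splitOf hg hwu hwv)

theorem IsPhylo.nonempty_and_compl_nonempty_of_mem_splits [Finite L] [Finite I]
    (hg : IsPhylo g) {S : Set L} (hS : S ∈ splits g) : S.Nonempty ∧ Sᶜ.Nonempty := by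
  obtain ⟨u, v, huv, rfl⟩ := hS
  exact ⟨splitOf_nonempty hg.2.1 hg.2.2.2 huv,
    (splitOf_nonempty hg.2.1 hg.2.2.2 huv.symm).mono (splitOf_swap_subset_compl hg.2.1 huv)⟩

theorem IsPhylo.mem_splits_of_nested [Finite L] [Finite I] (hg : IsPhylo g) {Y : Set L}
    (hY : Y.Nonempty) {u v : L ⊕ I} (huv : g.Adj u v) (hYuv : Y ⊆ splitOf g u v)
    (hnest : ∀ S ∈ splits g, S ⊆ splitOf g u v → Disjoint S Y ∨ S ⊆ Y ∨ Y ⊆ S) :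
    Y ∈ splits g := by
  obtain ⟨hconn, hacyc, hleaf, hdeg⟩ := hg
  revert hYuv hnest
  refine hacyc.induction_on_adj (P := fun u v => Y ⊆ splitOf g u v → (∀ S ∈ splits g,
    S ⊆ splitOf g u v → Disjoint S Y ∨ S ⊆ Y ∨ Y ⊆ S) → Y ∈ splits g)
    (fun u v huv ih hYuv hnest => ?_) huv
  cases u with
  | inl x =>
    rw [splitOf_eq_singleton (hleaf x) huv] at hYuv
    rw [hY.subset_singleton_iff.mp hYuv]
    exact ⟨.inl x, v, huv, (splitOf_eq_singleton (hleaf x) huv).symm⟩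
  | inr i =>
    obtain ⟨w₁, w₂, hw₁, hw₂, hw₁v, hw₂v, hnbr⟩ :=
      exists_adj_ne_of_ncard_neighborSet_eq_three (hdeg i) huv
    have hsub₁ := splitOf_subset_splitOf hacyc hw₁ hw₁v
    have hsub₂ := splitOf_subset_splitOf hacyc hw₂ hw₂v
    have hcover : splitOf g (.inr i) v ⊆ splitOf g w₁ (.inr i) ∪ splitOf g w₂ (.inr i) := by
      intro x hx
      obtain ⟨w, hw, hxw⟩ := hconn.exists_adj_mem_side (Sum.inl_ne_inr (a := x) (b := i))
      have hwv : w ≠ v := by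
        rintro rfl
        exact hacyc.notMem_side_swap huv hx hxw
      rcases hnbr w hw hwv with rfl | rfl
      exacts [.inl hxw, .inr hxw]
    by_cases hY₁ : Y ⊆ splitOf g w₁ (.inr i)
    · exact ih w₁ hw₁ hw₁v hY₁ fun S hS hSsub => hnest S hS (hSsub.trans hsub₁)
    by_cases hY₂ : Y ⊆ splitOf g w₂ (.inr i)
    · exact ih w₂ hw₂ hw₂v hY₂ fun S hS hSsub => hnest S hS (hSsub.trans hsub₂)
    have hcontains : ∀ {A A' : Set L}, A ∈ splits g → A ⊆ splitOf g (.inr i) v →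
        Y ⊆ A ∪ A' → ¬ Y ⊆ A → ¬ Y ⊆ A' → A ⊆ Y := by
      intro A A' hA hAsub hYA hnA hnA'
      rcases hnest A hA hAsub with hdisj | hAY | hYA'
      · exact absurd (fun y hy => (hYA hy).resolve_left (hdisj.notMem_of_mem_right hy)) hnA'
      · exact hAY
      · exact absurd hYA' hnA
    have hYcover := hYuv.trans hcover
    refine (hYuv.antisymm (hcover.trans (Set.union_subset ?_ ?_))) ▸ ⟨.inr i, v, huv, rfl⟩
    · exact hcontains ⟨w₁, _, hw₁, rfl⟩ hsub₁ hYcover hY₁ hY₂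
    · exact hcontains ⟨w₂, _, hw₂, rfl⟩ hsub₂ (hYcover.trans (Set.union_comm _ _).subset)
        hY₂ hY₁

theorem IsPhylo.exists_incompatible_split [Finite L] [Finite I] (hg : IsPhylo g) {X : Set L}
    (hX : X ∉ splits g) (hXne : X.Nonempty) (hXcne : Xᶜ.Nonempty) :
    ∃ S ∈ splits g, (S ∩ X).Nonempty ∧ (S ∩ Xᶜ).Nonempty ∧
      (Sᶜ ∩ X).Nonempty ∧ (Sᶜ ∩ Xᶜ).Nonempty := by
  by_contra! hcompat
  obtain ⟨a, ha⟩ := hXcne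
  obtain ⟨w, hw⟩ := Set.nonempty_of_ncard_ne_zero (s := g.neighborSet (.inl a))
    ((hg.2.2.1 a).trans_ne one_ne_zero)
  have hwa : g.Adj w (.inl a) := (g.mem_neighborSet _ _).mp hw |>.symm
  have ha_notMem : a ∉ splitOf g w (.inl a) :=
    splitOf_swap_subset_compl hg.2.1 hwa (mem_side_self _ _)
  refine hX (hg.mem_splits_of_nested hXne hwa (fun x hx => ?_) fun S hS hSsub => ?_)
  · obtain ⟨w', hw', hxw'⟩ :=
      hg.1.exists_adj_mem_side (Sum.inl_injective.ne (ne_of_mem_of_not_mem hx ha))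
    rwa [eq_of_adj_of_pdeg_eq_one (hg.2.2.1 a) hwa.symm hw'.symm] at hxw'
  · by_contra! ⟨hSX, hSX', hXS⟩
    obtain ⟨x, hxX, hxS⟩ := Set.not_subset.mp hXS
    have hempty := hcompat S hS (Set.not_disjoint_iff_nonempty_inter.mp hSX)
      (Set.nonempty_of_not_subset hSX') ⟨x, hxS, hxX⟩
    exact Set.eq_empty_iff_forall_notMem.mp hempty a ⟨fun h => ha_notMem (hSsub h), ha⟩

end Splits

/-- If `T` and `T'` are distinct unrooted binary trees on the
same leaf set, there is a split `(S', S'ᶜ)` of `T'` and a split `(S, Sᶜ)` of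
`T` such that all four intersections are nonempty. -/
theorem exists_conflicting_splits {L I : Type} [Fintype L] [Fintype I]
    (g g' : SimpleGraph (L ⊕ I)) (hg : IsPhylo g) (hg' : IsPhylo g')
    (hdistinct : splits g ≠ splits g') :
    ∃ S' ∈ splits g', ∃ S ∈ splits g,
      (S ∩ S').Nonempty ∧ (S ∩ S'ᶜ).Nonempty ∧
      (Sᶜ ∩ S').Nonempty ∧ (Sᶜ ∩ S'ᶜ).Nonempty := by
  by_cases hsub : splits g' ⊆ splits g
  · obtain ⟨X, hX, hX'⟩ := Set.not_subset.mp fun h => hdistinct (h.antisymm hsub)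
    obtain ⟨hXne, hXcne⟩ := hg.nonempty_and_compl_nonempty_of_mem_splits hX
    obtain ⟨S', hS', h₁, h₂, h₃, h₄⟩ := hg'.exists_incompatible_split hX' hXne hXcne
    refine ⟨S', hS', X, hX, ?_, ?_, ?_, ?_⟩ <;> rwa [Set.inter_comm]
  · obtain ⟨X, hX', hX⟩ := Set.not_subset.mp hsub
    obtain ⟨hXne, hXcne⟩ := hg'.nonempty_and_compl_nonempty_of_mem_splits hX'
    exact ⟨X, hX', hg.exists_incompatible_split hX hXne hXcne⟩
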